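/- arXiv:2411.00610 — 2 statements merged into one kernel-verified Lean document; each statement's English description precedes it below -/
import Mathlib

section
/- (Second-moment bound for the squared-TD-error increment). Fix h ∈ {1,…,H}, s ∈ S, a ∈ A, and let H ≥ 1. Suppose Q_h, Q_{h+1} : S × A → [0, H] and r_h : S × A → [0, 1]. Define, for s' ∈ S, X(s') := ( Q_h(s,a) − r_h(s,a) − max_{a' ∈ A} Q_{h+1}(s',a') )² − ( (T^{r}_h Q_{h+1})(s,a) − r_h(s,a) − max_{a' ∈ A} Q_{h+1}(s',a') )². Then E_{s' ~ P_h(s,a)}[ X(s')² ] ≤ 16 H² · E_{s' ~ P_h(s,a)}[ X(s') ]. -/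
open scoped BigOperators

/-- Expectation of a real-valued function under a probability mass function
on a finite type. -/
noncomputable def pExp {α : Type*} [Fintype α] (p : PMF α) (f : α → ℝ) : ℝ :=
  ∑ x, (p x).toReal * f x

/-- One-step Bellman backup at step `h` for reward component `rh : S → A → ℝ`:
`(T^r_h Q)(s,a) = r_h(s,a) + E_{s' ~ P_h(s,a)}[ max_{a'} Q(s',a') ]`. -/
noncomputable def bellman {S A : Type*} [Fintype S] [Fintype A]
    (P : ℕ → S → A → PMF S) (h : ℕ) (rh : S → A → ℝ) (Q : S → A → ℝ)
    (s : S) (a : A) : ℝ :=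
  rh s a + pExp (P h s a) (fun s' => ⨆ a', Q s' a')

/-!
Write `m(s') = max_{a'} Q_{h+1}(s',a')`, `b = E m` and `c = Q_h(s,a) - r_h(s,a)`; then `b` is the
centred part of the Bellman backup and `X = (c - m)² - (b - m)² = (c - b)(c + b - 2m)`.
Averaging, `E X = (c - b)²`, while pointwise `X² = (c - b)² (c + b - 2m)² ≤ (4H)² (c - b)²`
because `m, b ∈ [0, H]` and `c ∈ [-1, H]`.
-/

section pExp

variable {α : Type*} [Fintype α] (p : PMF α)

theorem PMF.sum_toReal_eq_one : ∑ x, (p x).toReal = 1 := by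
  rw [← ENNReal.toReal_sum fun x _ => p.apply_ne_top x, ← tsum_fintype (L := .unconditional α),
    p.tsum_coe, ENNReal.toReal_one]

theorem pExp_const (c : ℝ) : pExp p (fun _ => c) = c := by
  simp [pExp, ← Finset.sum_mul, p.sum_toReal_eq_one]

theorem pExp_affine (u v : ℝ) (f : α → ℝ) :
    pExp p (fun x => u + v * f x) = u + v * pExp p f := by
  simp only [pExp, mul_add, Finset.sum_add_distrib, ← Finset.sum_mul, p.sum_toReal_eq_one,
    Finset.mul_sum, mul_left_comm, one_mul]

theorem pExp_mono {f g : α → ℝ} (hfg : ∀ x, f x ≤ g x) : pExp p f ≤ pExp p g :=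
  Finset.sum_le_sum fun x _ => mul_le_mul_of_nonneg_left (hfg x) ENNReal.toReal_nonneg

theorem pExp_mem_Icc {f : α → ℝ} {l u : ℝ} (hf : ∀ x, f x ∈ Set.Icc l u) :
    pExp p f ∈ Set.Icc l u := by
  constructor
  · simpa only [pExp_const] using pExp_mono p fun x => (hf x).1
  · simpa only [pExp_const] using pExp_mono p fun x => (hf x).2

theorem pExp_sq_sub_sq_mean (c : ℝ) (f : α → ℝ) :
    pExp p (fun x => (c - f x) ^ 2 - (pExp p f - f x) ^ 2) = (c - pExp p f) ^ 2 := by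
  have hfactor : (fun x => (c - f x) ^ 2 - (pExp p f - f x) ^ 2) =
      fun x => (c - pExp p f) * (c + pExp p f) + -2 * (c - pExp p f) * f x := by
    funext x
    ring
  rw [hfactor, pExp_affine]
  ring

theorem pExp_sq_sub_sq_mean_sq_le {f : α → ℝ} {c K : ℝ}
    (hK : ∀ x, |c + pExp p f - 2 * f x| ≤ K) :
    pExp p (fun x => ((c - f x) ^ 2 - (pExp p f - f x) ^ 2) ^ 2)
      ≤ K ^ 2 * pExp p (fun x => (c - f x) ^ 2 - (pExp p f - f x) ^ 2) := by
  rw [pExp_sq_sub_sq_mean, ← pExp_const p (K ^ 2 * (c - pExp p f) ^ 2)]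
  refine pExp_mono p fun x => ?_
  have hsq : (c + pExp p f - 2 * f x) ^ 2 ≤ K ^ 2 :=
    (sq_abs _).symm.le.trans (pow_le_pow_left₀ (abs_nonneg _) (hK x) 2)
  calc ((c - f x) ^ 2 - (pExp p f - f x) ^ 2) ^ 2
      = (c - pExp p f) ^ 2 * (c + pExp p f - 2 * f x) ^ 2 := by ring
    _ ≤ K ^ 2 * (c - pExp p f) ^ 2 := by
      rw [mul_comm (K ^ 2)]
      exact mul_le_mul_of_nonneg_left hsq (sq_nonneg _)

end pExp

theorem second_moment_bound_general {S A : Type*} [Fintype S] [Fintype A]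
    (H : ℕ) (hH : 1 ≤ H) (P : ℕ → S → A → PMF S)
    (h : ℕ) (s : S) (a : A)
    (Qh Qh1 : S → A → ℝ) (rh : S → A → ℝ)
    (hQh : ∀ s' a', 0 ≤ Qh s' a' ∧ Qh s' a' ≤ (H : ℝ))
    (hQh1 : ∀ s' a', 0 ≤ Qh1 s' a' ∧ Qh1 s' a' ≤ (H : ℝ))
    (hrh : ∀ s' a', 0 ≤ rh s' a' ∧ rh s' a' ≤ 1)
    (X : S → ℝ)
    (hX : ∀ s', X s' =
      (Qh s a - rh s a - ⨆ a', Qh1 s' a') ^ 2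
        - (bellman P h rh Qh1 s a - rh s a - ⨆ a', Qh1 s' a') ^ 2) :
    pExp (P h s a) (fun s' => (X s') ^ 2)
      ≤ 16 * (H : ℝ) ^ 2 * pExp (P h s a) X := by
  set p := P h s a
  set m : S → ℝ := fun s' => ⨆ a', Qh1 s' a'
  have hHR : (1 : ℝ) ≤ H := by exact_mod_cast hH
  have hm : ∀ s', m s' ∈ Set.Icc 0 (H : ℝ) := fun s' =>
    ⟨Real.iSup_nonneg fun a' => (hQh1 s' a').1,
      Real.iSup_le (fun a' => (hQh1 s' a').2) (by linarith)⟩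
  have hb := pExp_mem_Icc p hm
  have hX' : X = fun s' => (Qh s a - rh s a - m s') ^ 2 - (pExp p m - m s') ^ 2 := by
    funext s'
    rw [hX s', bellman, add_sub_cancel_left]
  have hK : ∀ s', |Qh s a - rh s a + pExp p m - 2 * m s'| ≤ 4 * H := by
    intro s'
    obtain ⟨hQ0, hQH⟩ := hQh s a
    obtain ⟨hr0, hr1⟩ := hrh s a
    obtain ⟨hm0, hmH⟩ := hm s'
    rw [abs_le]
    constructor <;> linarith [hb.1, hb.2]
  rw [hX', show 16 * (H : ℝ) ^ 2 = (4 * H) ^ 2 by ring]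
  exact pExp_sq_sub_sq_mean_sq_le p hK

/-- Second-moment bound for the squared-TD-error increment:
`E[X(s')²] ≤ 16 H² E[X(s')]` where
`X(s') = (Q_h(s,a) − r_h(s,a) − max_{a'} Q_{h+1}(s',a'))²
       − ((T^r_h Q_{h+1})(s,a) − r_h(s,a) − max_{a'} Q_{h+1}(s',a'))²`. -/
theorem second_moment_bound {S A : Type*} [Fintype S] [Fintype A]
    [Nonempty S] [Nonempty A]
    (H : ℕ) (hH : 1 ≤ H) (P : ℕ → S → A → PMF S)
    (h : ℕ) (hh1 : 1 ≤ h) (hh2 : h ≤ H) (s : S) (a : A)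
    (Qh Qh1 : S → A → ℝ) (rh : S → A → ℝ)
    (hQh : ∀ s' a', 0 ≤ Qh s' a' ∧ Qh s' a' ≤ (H : ℝ))
    (hQh1 : ∀ s' a', 0 ≤ Qh1 s' a' ∧ Qh1 s' a' ≤ (H : ℝ))
    (hrh : ∀ s' a', 0 ≤ rh s' a' ∧ rh s' a' ≤ 1)
    (X : S → ℝ)
    (hX : ∀ s', X s' =
      (Qh s a - rh s a - ⨆ a', Qh1 s' a') ^ 2
        - (bellman P h rh Qh1 s a - rh s a - ⨆ a', Qh1 s' a') ^ 2) :
    pExp (P h s a) (fun s' => (X s') ^ 2)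
      ≤ 16 * (H : ℝ) ^ 2 * pExp (P h s a) X :=
  second_moment_bound_general H hH P h s a Qh Qh1 rh hQh hQh1 hrh X hX
end

section
/- (Lemma B.5, Freedman's inequality). Let (Ω, 𝓕, P) be a probability space with a filtration (𝓕_t)_{0 ≤ t ≤ T}, and let (X_t)_{1 ≤ t ≤ T} be real-valued random variables such that each X_t is 𝓕_t-measurable, E[X_t | 𝓕_{t−1}] = 0 almost surely, and |X_t| ≤ R almost surely, where R > 0. Then for every η ∈ (0, 1/R] and every δ ∈ (0, 1), with probability at least 1 − δ: Σ_{t=1}^T X_t ≤ η · Σ_{t=1}^T E[X_t² | 𝓕_{t−1}] + log(1/δ)/η. -/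
/-!
Write `Y_t = E[X_t² | 𝓕_{t-1}]` and `S_n = Σ_{t ≤ n} (η X_t - η² Y_t)`. Since `|η X_t| ≤ 1`, the
bound `eˣ ≤ 1 + x + x²` on `[-1, 1]` and `E[X_t | 𝓕_{t-1}] = 0` give
`E[exp (η X_t) | 𝓕_{t-1}] ≤ 1 + η² Y_t ≤ exp (η² Y_t)`. Pulling out the `𝓕_{t-1}`-measurable
factor `exp (S_{t-1} - η² Y_t)` then shows that `E[exp S_n]` is non-increasing, so
`E[exp S_T] ≤ 1`, and Chernoff's bound gives `P(S_T ≥ log (1/δ)) ≤ δ`. On the complement,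
dividing `S_T < log (1/δ)` by `η` gives the claimed bound.
-/

open MeasureTheory

section

open ProbabilityTheory Real Finset

variable {Ω : Type*} {m m0 : MeasurableSpace Ω} {μ : Measure Ω}

theorem integrable_exp_of_ae_le [IsFiniteMeasure μ] {Z : Ω → ℝ} {C : ℝ}
    (hZm : AEStronglyMeasurable Z μ) (hZ : ∀ᵐ ω ∂μ, Z ω ≤ C) :
    Integrable (fun ω => exp (Z ω)) μ :=
  .of_bound (continuous_exp.comp_aestronglyMeasurable hZm) (exp C) <| by
    filter_upwards [hZ] with ω hω
    rw [norm_of_nonneg (exp_pos _).le]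
    exact exp_le_exp.2 hω

theorem condExp_exp_mul_le_exp_mul_condExp_sq [IsFiniteMeasure μ] (hm : m ≤ m0) {X : Ω → ℝ}
    {R η : ℝ} (hXm : AEStronglyMeasurable X μ) (hX : ∀ᵐ ω ∂μ, |X ω| ≤ R) (hη : 0 ≤ η)
    (hηR : η * R ≤ 1) (hcond : μ[X | m] =ᵐ[μ] 0) :
    μ[fun ω => exp (η * X ω) | m] ≤ᵐ[μ] fun ω => exp (η ^ 2 * μ[fun ω => X ω ^ 2 | m] ω) := by
  have hηX : ∀ᵐ ω ∂μ, |η * X ω| ≤ 1 := by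
    filter_upwards [hX] with ω hω
    rw [abs_mul, abs_of_nonneg hη]
    nlinarith [abs_nonneg (X ω)]
  have hXint : Integrable X μ := .of_bound hXm R hX
  have hX2int : Integrable (fun ω => X ω ^ 2) μ :=
    .of_bound (hXm.pow 2) (R ^ 2) <| by
      filter_upwards [hX] with ω hω
      rw [norm_pow, norm_eq_abs]
      exact pow_le_pow_left₀ (abs_nonneg _) hω 2
  set q : Ω → ℝ := (fun _ => 1) + (η • X + η ^ 2 • fun ω => X ω ^ 2)
  have hqint : Integrable q μ := (integrable_const 1).add ((hXint.smul η).add (hX2int.smul _))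
  have hexp_le_q : (fun ω => exp (η * X ω)) ≤ᵐ[μ] q := by
    filter_upwards [hηX] with ω hω
    have := (abs_le.1 (abs_exp_sub_one_sub_id_le hω)).2
    simp only [q, Pi.add_apply, Pi.smul_apply, smul_eq_mul]
    linarith [mul_pow η (X ω) 2]
  have hexp_int : Integrable (fun ω => exp (η * X ω)) μ :=
    integrable_exp_of_ae_le (hXm.const_mul η) (hηX.mono fun ω hω => (abs_le.1 hω).2)
  have hcondExp_q :
      μ[q | m] =ᵐ[μ] (fun _ => 1) + (η • μ[X | m] + η ^ 2 • μ[fun ω => X ω ^ 2 | m]) :=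
    (condExp_add (integrable_const 1) ((hXint.smul η).add (hX2int.smul _)) m).trans <|
      (Filter.EventuallyEq.of_eq (condExp_const hm 1)).add <|
        (condExp_add (hXint.smul η) (hX2int.smul _) m).trans <|
          (condExp_smul η X m).add (condExp_smul _ _ m)
  filter_upwards [condExp_mono (m := m) hexp_int hqint hexp_le_q, hcondExp_q, hcond]
    with ω hmono hq h0
  calc μ[fun ω => exp (η * X ω) | m] ω ≤ μ[q | m] ω := hmono
    _ = η ^ 2 * μ[fun ω => X ω ^ 2 | m] ω + 1 := by
        simp only [hq, Pi.add_apply, Pi.smul_apply, h0, Pi.zero_apply, smul_eq_mul]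
        ring
    _ ≤ exp (η ^ 2 * μ[fun ω => X ω ^ 2 | m] ω) := add_one_le_exp _

theorem integral_mul_le_integral_mul_of_condExp_le [IsFiniteMeasure μ] (hm : m ≤ m0)
    {G f g : Ω → ℝ} (hG : StronglyMeasurable[m] G) (hG0 : 0 ≤ᵐ[μ] G) (hf : Integrable f μ)
    (hGf : Integrable (G * f) μ) (hGg : Integrable (G * g) μ) (hfg : μ[f | m] ≤ᵐ[μ] g) :
    ∫ ω, (G * f) ω ∂μ ≤ ∫ ω, (G * g) ω ∂μ := by
  have hpull := condExp_mul_of_stronglyMeasurable_left hG hGf hf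
  calc ∫ ω, (G * f) ω ∂μ = ∫ ω, μ[G * f | m] ω ∂μ := (integral_condExp hm).symm
    _ = ∫ ω, (G * μ[f | m]) ω ∂μ := integral_congr_ae hpull
    _ ≤ ∫ ω, (G * g) ω ∂μ := by
        refine integral_mono_ae (integrable_condExp.congr hpull) hGg ?_
        filter_upwards [hG0, hfg] with ω hG0ω hfgω
        exact mul_le_mul_of_nonneg_left hfgω hG0ω

theorem ofReal_one_sub_le_measure_lt_log [IsProbabilityMeasure μ] {Z : Ω → ℝ} {δ : ℝ}
    (hZint : Integrable (fun ω => exp (Z ω)) μ) (hZ : ∫ ω, exp (Z ω) ∂μ ≤ 1) (hδ : 0 < δ) :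
    ENNReal.ofReal (1 - δ) ≤ μ {ω | Z ω < log (1 / δ)} := by
  have hchernoff := measure_ge_le_exp_mul_mgf (X := Z) (μ := μ) (log (1 / δ)) zero_le_one
    (by simpa using hZint)
  have hmgf : mgf Z μ 1 ≤ 1 := by simpa [mgf] using hZ
  have htail : μ {ω | log (1 / δ) ≤ Z ω} ≤ ENNReal.ofReal δ := by
    rw [ENNReal.le_ofReal_iff_toReal_le (measure_ne_top _ _) hδ.le, ← measureReal_def]
    calc μ.real {ω | log (1 / δ) ≤ Z ω} ≤ δ * mgf Z μ 1 := by
          simpa [exp_log hδ] using hchernoff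
      _ ≤ δ := mul_le_of_le_one_right hδ.le hmgf
  have hcover : 1 ≤ μ {ω | Z ω < log (1 / δ)} + μ {ω | log (1 / δ) ≤ Z ω} :=
    calc 1 = μ Set.univ := measure_univ.symm
      _ ≤ μ ({ω | Z ω < log (1 / δ)} ∪ {ω | log (1 / δ) ≤ Z ω}) :=
          measure_mono fun ω _ => lt_or_ge (Z ω) _
      _ ≤ _ := measure_union_le _ _
  rw [ENNReal.ofReal_sub 1 hδ.le, ENNReal.ofReal_one, tsub_le_iff_right]
  exact hcover.trans (by gcongr)

section FreedmanExponent

variable {𝓕 : Filtration ℕ m0} {X : ℕ → Ω → ℝ} {R η : ℝ} {n : ℕ}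

noncomputable def freedmanExponent (μ : Measure Ω) (𝓕 : Filtration ℕ m0) (X : ℕ → Ω → ℝ)
    (η : ℝ) (n : ℕ) (ω : Ω) : ℝ :=
  ∑ t ∈ Icc 1 n, (η * X t ω - η ^ 2 * μ[fun ω' => X t ω' ^ 2 | 𝓕 (t - 1)] ω)

theorem freedmanExponent_zero : freedmanExponent μ 𝓕 X η 0 = 0 := by
  ext ω
  simp [freedmanExponent]

theorem freedmanExponent_succ (n : ℕ) (ω : Ω) :
    freedmanExponent μ 𝓕 X η (n + 1) ω =
      freedmanExponent μ 𝓕 X η n ω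
        + (η * X (n + 1) ω - η ^ 2 * μ[fun ω' => X (n + 1) ω' ^ 2 | 𝓕 n] ω) := by
  simp only [freedmanExponent]
  rw [sum_Icc_succ_top (Nat.le_add_left 1 n), Nat.add_sub_cancel]

theorem freedmanExponent_eq (n : ℕ) (ω : Ω) :
    freedmanExponent μ 𝓕 X η n ω =
      η * ∑ t ∈ Icc 1 n, X t ω
        - η ^ 2 * ∑ t ∈ Icc 1 n, μ[fun ω' => X t ω' ^ 2 | 𝓕 (t - 1)] ω := by
  simp only [freedmanExponent, sum_sub_distrib, mul_sum]

theorem stronglyMeasurable_freedmanExponent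
    (hadapted : ∀ t ∈ Icc 1 n, StronglyMeasurable[𝓕 t] (X t)) :
    StronglyMeasurable[𝓕 n] (freedmanExponent μ 𝓕 X η n) := by
  refine Finset.stronglyMeasurable_fun_sum _ fun t ht => ?_
  have htn : t ≤ n := (mem_Icc.1 ht).2
  exact (stronglyMeasurable_const.mul ((hadapted t ht).mono (𝓕.mono htn))).sub
    (stronglyMeasurable_const.mul (stronglyMeasurable_condExp.mono (𝓕.mono (by omega))))

theorem freedmanExponent_ae_le (hη : 0 ≤ η) (hbdd : ∀ t ∈ Icc 1 n, ∀ᵐ ω ∂μ, |X t ω| ≤ R) :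
    ∀ᵐ ω ∂μ, freedmanExponent μ 𝓕 X η n ω ≤ n * (η * R) := by
  have hsq : ∀ t ∈ Icc 1 n, 0 ≤ᵐ[μ] μ[fun ω' => X t ω' ^ 2 | 𝓕 (t - 1)] :=
    fun t _ => condExp_nonneg (ae_of_all _ fun ω => sq_nonneg _)
  filter_upwards [(Filter.eventually_all_finset _).2 hbdd,
    (Filter.eventually_all_finset _).2 hsq] with ω hXω hsqω
  calc freedmanExponent μ 𝓕 X η n ω ≤ (Icc 1 n).card • (η * R) := by
        refine sum_le_card_nsmul _ _ _ fun t ht => ?_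
        have hY := hsqω t ht
        have hXR := (abs_le.1 (hXω t ht)).2
        simp only [Pi.zero_apply] at hY
        nlinarith [sq_nonneg η]
    _ = n * (η * R) := by simp

theorem integrable_exp_freedmanExponent [IsFiniteMeasure μ] (hη : 0 ≤ η)
    (hadapted : ∀ t ∈ Icc 1 n, StronglyMeasurable[𝓕 t] (X t))
    (hbdd : ∀ t ∈ Icc 1 n, ∀ᵐ ω ∂μ, |X t ω| ≤ R) :
    Integrable (fun ω => exp (freedmanExponent μ 𝓕 X η n ω)) μ :=
  integrable_exp_of_ae_le
    ((stronglyMeasurable_freedmanExponent hadapted).mono (𝓕.le n)).aestronglyMeasurable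
    (freedmanExponent_ae_le hη hbdd)

theorem integral_exp_freedmanExponent_succ_le [IsFiniteMeasure μ] (hη : 0 ≤ η)
    (hηR : η * R ≤ 1) (hadapted : ∀ t ∈ Icc 1 (n + 1), StronglyMeasurable[𝓕 t] (X t))
    (hcond : μ[X (n + 1) | 𝓕 n] =ᵐ[μ] 0) (hbdd : ∀ t ∈ Icc 1 (n + 1), ∀ᵐ ω ∂μ, |X t ω| ≤ R) :
    ∫ ω, exp (freedmanExponent μ 𝓕 X η (n + 1) ω) ∂μ ≤
      ∫ ω, exp (freedmanExponent μ 𝓕 X η n ω) ∂μ := by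
  have hsub : Icc 1 n ⊆ Icc 1 (n + 1) := Icc_subset_Icc_right n.le_succ
  have hlast : n + 1 ∈ Icc 1 (n + 1) := right_mem_Icc.2 (Nat.le_add_left 1 n)
  set Y := μ[fun ω' => X (n + 1) ω' ^ 2 | 𝓕 n]
  set G : Ω → ℝ := fun ω => exp (freedmanExponent μ 𝓕 X η n ω - η ^ 2 * Y ω)
  have hG : StronglyMeasurable[𝓕 n] G :=
    continuous_exp.comp_stronglyMeasurable <|
      (stronglyMeasurable_freedmanExponent fun t ht => hadapted t (hsub ht)).sub
        (stronglyMeasurable_const.mul stronglyMeasurable_condExp)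
  have hsplit : (fun ω => exp (freedmanExponent μ 𝓕 X η (n + 1) ω)) =
      G * fun ω => exp (η * X (n + 1) ω) := by
    ext ω
    simp only [G, Y, Pi.mul_apply, ← exp_add, freedmanExponent_succ]
    ring_nf
  have hmerge : (fun ω => exp (freedmanExponent μ 𝓕 X η n ω)) =
      G * fun ω => exp (η ^ 2 * Y ω) := by
    ext ω
    simp only [G, Pi.mul_apply, ← exp_add]
    ring_nf
  have hXm : AEStronglyMeasurable (X (n + 1)) μ :=
    ((hadapted _ hlast).mono (𝓕.le _)).aestronglyMeasurable
  have hexp_int : Integrable (fun ω => exp (η * X (n + 1) ω)) μ :=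
    integrable_exp_of_ae_le (hXm.const_mul η)
      ((hbdd _ hlast).mono fun ω hω => mul_le_mul_of_nonneg_left (abs_le.1 hω).2 hη)
  have hint_succ := integrable_exp_freedmanExponent hη hadapted hbdd
  have hint := integrable_exp_freedmanExponent (μ := μ) hη (fun t ht => hadapted t (hsub ht))
    (fun t ht => hbdd t (hsub ht))
  rw [hsplit] at hint_succ ⊢
  rw [hmerge] at hint ⊢
  exact integral_mul_le_integral_mul_of_condExp_le (𝓕.le n) hG
    (ae_of_all _ fun ω => (exp_pos _).le) hexp_int hint_succ hint
    (condExp_exp_mul_le_exp_mul_condExp_sq (𝓕.le n) hXm (hbdd _ hlast) hη hηR hcond)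

theorem integral_exp_freedmanExponent_le_one [IsProbabilityMeasure μ] (hη : 0 ≤ η)
    (hηR : η * R ≤ 1) (hadapted : ∀ t ∈ Icc 1 n, StronglyMeasurable[𝓕 t] (X t))
    (hcond : ∀ t ∈ Icc 1 n, μ[X t | 𝓕 (t - 1)] =ᵐ[μ] 0)
    (hbdd : ∀ t ∈ Icc 1 n, ∀ᵐ ω ∂μ, |X t ω| ≤ R) :
    ∫ ω, exp (freedmanExponent μ 𝓕 X η n ω) ∂μ ≤ 1 := by
  induction n with
  | zero => simp [freedmanExponent_zero]
  | succ n ih =>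
    have hsub : Icc 1 n ⊆ Icc 1 (n + 1) := Icc_subset_Icc_right n.le_succ
    have hlast : n + 1 ∈ Icc 1 (n + 1) := right_mem_Icc.2 (Nat.le_add_left 1 n)
    calc ∫ ω, exp (freedmanExponent μ 𝓕 X η (n + 1) ω) ∂μ
        ≤ ∫ ω, exp (freedmanExponent μ 𝓕 X η n ω) ∂μ :=
          integral_exp_freedmanExponent_succ_le hη hηR hadapted
            (by simpa using hcond _ hlast) hbdd
      _ ≤ 1 := ih (fun t ht => hadapted t (hsub ht)) (fun t ht => hcond t (hsub ht))
          (fun t ht => hbdd t (hsub ht))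

end FreedmanExponent

end

theorem freedman_inequality_general {Ω : Type*} {m : MeasurableSpace Ω}
    (μ : Measure Ω) [IsProbabilityMeasure μ]
    (𝓕 : Filtration ℕ m)
    (T : ℕ) (R : ℝ) (hR : 0 < R)
    (X : ℕ → Ω → ℝ)
    (hadapted : ∀ t ∈ Finset.Icc 1 T, StronglyMeasurable[𝓕 t] (X t))
    (hcond : ∀ t ∈ Finset.Icc 1 T, μ[X t | 𝓕 (t - 1)] =ᵐ[μ] 0)
    (hbdd : ∀ t ∈ Finset.Icc 1 T, ∀ᵐ ω ∂μ, |X t ω| ≤ R)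
    (η : ℝ) (hη1 : 0 < η) (hη2 : η ≤ 1 / R)
    (δ : ℝ) (hδ1 : 0 < δ) :
    ENNReal.ofReal (1 - δ) ≤
      μ {ω | ∑ t ∈ Finset.Icc 1 T, X t ω ≤
          η * ∑ t ∈ Finset.Icc 1 T, (μ[fun ω' => (X t ω') ^ 2 | 𝓕 (t - 1)]) ω
            + Real.log (1 / δ) / η} := by
  have hηR : η * R ≤ 1 := (le_div_iff₀ hR).1 hη2
  refine (ofReal_one_sub_le_measure_lt_log
    (integrable_exp_freedmanExponent hη1.le hadapted hbdd)
    (integral_exp_freedmanExponent_le_one hη1.le hηR hadapted hcond hbdd) hδ1).trans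
    (measure_mono fun ω hω => ?_)
  simp only [Set.mem_ofPred_eq, freedmanExponent_eq] at hω ⊢
  rw [← sub_le_iff_le_add', le_div_iff₀ hη1]
  nlinarith

/-- Lemma B.5 (Freedman's inequality): for a martingale difference sequence
`(X_t)_{1 ≤ t ≤ T}` adapted to the filtration `(𝓕_t)` with `|X_t| ≤ R` a.s.,
for every `η ∈ (0, 1/R]` and `δ ∈ (0,1)`, with probability at least `1 − δ`,
`Σ_{t=1}^T X_t ≤ η Σ_{t=1}^T E[X_t² | 𝓕_{t−1}] + log(1/δ)/η`. -/
theorem freedman_inequality {Ω : Type*} {m : MeasurableSpace Ω}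
    (μ : Measure Ω) [IsProbabilityMeasure μ]
    (𝓕 : Filtration ℕ m)
    (T : ℕ) (hT : 1 ≤ T) (R : ℝ) (hR : 0 < R)
    (X : ℕ → Ω → ℝ)
    (hadapted : ∀ t ∈ Finset.Icc 1 T, StronglyMeasurable[𝓕 t] (X t))
    (hcond : ∀ t ∈ Finset.Icc 1 T, μ[X t | 𝓕 (t - 1)] =ᵐ[μ] 0)
    (hbdd : ∀ t ∈ Finset.Icc 1 T, ∀ᵐ ω ∂μ, |X t ω| ≤ R)
    (η : ℝ) (hη1 : 0 < η) (hη2 : η ≤ 1 / R)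
    (δ : ℝ) (hδ1 : 0 < δ) (hδ2 : δ < 1) :
    ENNReal.ofReal (1 - δ) ≤
      μ {ω | ∑ t ∈ Finset.Icc 1 T, X t ω ≤
          η * ∑ t ∈ Finset.Icc 1 T, (μ[fun ω' => (X t ω') ^ 2 | 𝓕 (t - 1)]) ω
            + Real.log (1 / δ) / η} :=
  freedman_inequality_general μ 𝓕 T R hR X hadapted hcond hbdd η hη1 hη2 δ hδ1
end
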